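/- arXiv:1606.09018 — 3 statements merged into one kernel-verified Lean document; each statement's English description precedes it below -/
import Mathlib

section
/- Let P be a local lattice. The map sending a positive n-zigzag (x₀,...,xₙ) to the multifraction [x₀,x₁] / [x₂,x₁] / [x₂,x₃] / ⋯ (and a negative zigzag to the corresponding multifraction starting with an inverted interval) is a bijection between positive (resp. negative) n-zigzags in P and simple positive (resp. negative) n-multifractions on Int(P). Moreover, if the multifraction associated to a zigzag is unital, then the zigzag is closed (xₙ = x₀). -/
/-! Common definitions: multifractions, divisibility, interval monoids, zigzags. -/

section Defs

variable {M : Type*}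

/-- A multifraction on a monoid `M`: a finite sequence with entries alternately in `M`
(sign `true`) and in a formal disjoint copy of `M` (sign `false`). -/
structure Multifraction (M : Type*) [Monoid M] where
  entries : List (Bool × M)
  alt : entries.Chain' fun p q => p.1 ≠ q.1

/-- The product of two multifraction entry lists: merge the adjacent entries when they have
the same sign, concatenate otherwise. -/
def mfMul [Monoid M] (l₁ l₂ : List (Bool × M)) : List (Bool × M) :=
  match l₁.getLast?, l₂ with
  | some (b, x), (c, y) :: t =>
      if b = c then l₁.dropLast ++ (b, if b then x * y else y * x) :: t else l₁ ++ l₂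
  | _, _ => l₁ ++ l₂

/-- The one-entry positive multifraction. -/
def mfPos [Monoid M] (x : M) : Multifraction M := ⟨[(true, x)], List.isChain_singleton _⟩

/-- The one-entry negative multifraction. -/
def mfNeg [Monoid M] (x : M) : Multifraction M := ⟨[(false, x)], List.isChain_singleton _⟩

/-- `a` left divides `b`. -/
def LDvd [Monoid M] (a b : M) : Prop := ∃ c, a * c = b

/-- `a` right divides `b`. -/
def RDvd [Monoid M] (a b : M) : Prop := ∃ c, c * a = b

/-- `M` is (left and right) cancellative. -/
def Cancellative (M : Type*) [Monoid M] : Prop :=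
  (∀ a b c : M, a * b = a * c → b = c) ∧ (∀ a b c : M, b * a = c * a → b = c)

/-- `1` is the only invertible element of `M`. -/
def TrivialUnits (M : Type*) [Monoid M] : Prop := ∀ a : M, IsUnit a → a = 1

/-- Any two elements admit a left gcd. -/
def HasLeftGcds (M : Type*) [Monoid M] : Prop :=
  ∀ a b : M, ∃ d, LDvd d a ∧ LDvd d b ∧ ∀ e, LDvd e a → LDvd e b → LDvd e d

/-- Any two elements admit a right gcd. -/
def HasRightGcds (M : Type*) [Monoid M] : Prop :=
  ∀ a b : M, ∃ d, RDvd d a ∧ RDvd d b ∧ ∀ e, RDvd e a → RDvd e b → RDvd e d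

/-- `M` is a gcd-monoid. -/
def GcdMonoidProp (M : Type*) [Monoid M] : Prop :=
  Cancellative M ∧ TrivialUnits M ∧ HasLeftGcds M ∧ HasRightGcds M

/-- `m` is a right lcm of `u` and `v`. -/
def IsRightLcm [Monoid M] (u v m : M) : Prop :=
  LDvd u m ∧ LDvd v m ∧ ∀ w, LDvd u w → LDvd v w → LDvd m w

/-- `m` is a left lcm of `u` and `v`. -/
def IsLeftLcm [Monoid M] (u v m : M) : Prop :=
  RDvd u m ∧ RDvd v m ∧ ∀ w, RDvd u w → RDvd v w → RDvd m w

/-- `M` is a noetherian monoid: cancellative, with trivial units, and with well-founded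
proper left and right divisibility. -/
def NoetherianMonoid (M : Type*) [Monoid M] : Prop :=
  Cancellative M ∧ TrivialUnits M ∧
    WellFounded (fun a b : M => LDvd a b ∧ a ≠ b) ∧
    WellFounded (fun a b : M => RDvd a b ∧ a ≠ b)

/-- An atom of a monoid. -/
def MonAtom [Monoid M] (a : M) : Prop :=
  a ≠ 1 ∧ ∀ b c : M, a = b * c → b = 1 ∨ c = 1

/-- `η : M →* G` exhibits `G` as the enveloping (universal) group of `M`. -/
def IsEnvelopingGroup (M : Type*) [Monoid M] (G : Type*) [Group G] (η : M →* G) : Prop :=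
  ∀ (H : Type*) [Group H] (f : M →* H), ∃! g : G →* H, g.comp η = f

/-- Evaluation of a multifraction in a group `G` through `η : M →* G`. -/
def mfEval [Monoid M] {G : Type*} [Group G] (η : M →* G) (a : Multifraction M) : G :=
  (a.entries.map fun p => if p.1 then η p.2 else (η p.2)⁻¹).prod

/-- A multifraction is trivial if all its entries equal `1`. -/
def MfTrivial [Monoid M] (a : Multifraction M) : Prop := ∀ p ∈ a.entries, p.2 = 1

/-- `a` is a proper piece of `b` (relative to a monoid structure on multifractions). -/
def Piece [Monoid M] [Monoid (Multifraction M)] (a b : Multifraction M) : Prop :=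
  ∃ c d : Multifraction M, b = c * a * d ∧ ¬(MfTrivial c ∧ MfTrivial d)

/-- The `j`-th entry of a multifraction (with default `(true, 1)`). -/
def mfEntry [Monoid M] (a : Multifraction M) (j : ℕ) : Bool × M :=
  (a.entries[j]?).getD (true, 1)

/-- The reduction rule `R_{i,x}` (here `j = i - 1` is the 0-based level):
`b = a • R_{i,x}`. -/
def RedAt [Monoid M] (a b : Multifraction M) (j : ℕ) (x : M) : Prop :=
  b.entries.length = a.entries.length ∧ j + 1 < a.entries.length ∧
  (∀ k, ¬(j - 1 ≤ k ∧ k ≤ j + 1) → b.entries[k]? = a.entries[k]?) ∧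
  (∀ k, (mfEntry b k).1 = (mfEntry a k).1) ∧
  (if (mfEntry a j).1 then
     if j = 0 then
       (mfEntry b 0).2 * x = (mfEntry a 0).2 ∧ (mfEntry b 1).2 * x = (mfEntry a 1).2
     else ∃ x' : M,
       (mfEntry b (j - 1)).2 = x' * (mfEntry a (j - 1)).2 ∧
       (mfEntry b j).2 * x = x' * (mfEntry a j).2 ∧
       IsLeftLcm x (mfEntry a j).2 ((mfEntry b j).2 * x) ∧
       (mfEntry b (j + 1)).2 * x = (mfEntry a (j + 1)).2
   else
     if j = 0 then
       x * (mfEntry b 0).2 = (mfEntry a 0).2 ∧ x * (mfEntry b 1).2 = (mfEntry a 1).2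
     else ∃ x' : M,
       (mfEntry b (j - 1)).2 = (mfEntry a (j - 1)).2 * x' ∧
       x * (mfEntry b j).2 = (mfEntry a j).2 * x' ∧
       IsRightLcm x (mfEntry a j).2 (x * (mfEntry b j).2) ∧
       x * (mfEntry b (j + 1)).2 = (mfEntry a (j + 1)).2)

/-- One reduction step. -/
def Reduces [Monoid M] (a b : Multifraction M) : Prop := ∃ j x, x ≠ 1 ∧ RedAt a b j x

/-- A multifraction is reducible if some rule `R_{i,x}` with `x ≠ 1` applies to it. -/
def Reducible [Monoid M] (a : Multifraction M) : Prop := ∃ b, Reduces a b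

/-- Iterated reduction. -/
def ReducesStar [Monoid M] : Multifraction M → Multifraction M → Prop :=
  Relation.ReflTransGen Reduces

/-- Semi-convergence of reduction (relative to an enveloping group `η : M →* G`):
every unital multifraction reduces to a trivial one. -/
def SemiConvergent [Monoid M] {G : Type*} [Group G] (η : M →* G) : Prop :=
  ∀ a : Multifraction M, mfEval η a = 1 → ∃ b, ReducesStar a b ∧ MfTrivial b

end Defs

section Interval

variable (P : Type*) [PartialOrder P]

/-- The intervals of a poset `P`. -/
def Iv := {p : P × P // p.1 ≤ p.2}

/-- The defining relations of the interval monoid of `P`. -/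
def intervalRel : FreeMonoid (Iv P) → FreeMonoid (Iv P) → Prop := fun u v =>
  (∃ (x y z : P) (hxy : x ≤ y) (hyz : y ≤ z),
      u = FreeMonoid.of ⟨(x, z), hxy.trans hyz⟩ ∧
      v = FreeMonoid.of ⟨(x, y), hxy⟩ * FreeMonoid.of ⟨(y, z), hyz⟩) ∨
  (∃ x : P, u = FreeMonoid.of ⟨(x, x), le_refl x⟩ ∧ v = 1)

/-- The interval monoid of the poset `P`. -/
def IntervalMonoid := (conGen (intervalRel P)).Quotient

instance : Monoid (IntervalMonoid P) :=
  inferInstanceAs (Monoid (conGen (intervalRel P)).Quotient)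

variable {P}

/-- The generator `[x, y]` of the interval monoid. -/
def intv (I : Iv P) : IntervalMonoid P := (conGen (intervalRel P)).mk' (FreeMonoid.of I)

variable (P)

/-- `P` is a local lattice: each `P^{≥ x}` is a meet-semilattice and each `P^{≤ x}` is a
join-semilattice. -/
def LocalLattice : Prop :=
  (∀ x a b : P, x ≤ a → x ≤ b →
      ∃ m, x ≤ m ∧ m ≤ a ∧ m ≤ b ∧ ∀ c, x ≤ c → c ≤ a → c ≤ b → c ≤ m) ∧
  (∀ x a b : P, a ≤ x → b ≤ x →
      ∃ m, m ≤ x ∧ a ≤ m ∧ b ≤ m ∧ ∀ c, c ≤ x → a ≤ c → b ≤ c → m ≤ c)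

/-- Noetherianity conditions on the poset `P`: no infinite descending chain in any `P^{≥ x}`
and no infinite ascending chain in any `P^{≤ x}`. -/
def PosetNoethCond : Prop :=
  ∀ x : P, WellFounded (fun a b : {y : P // x ≤ y} => (a : P) < (b : P)) ∧
    WellFounded (fun a b : {y : P // y ≤ x} => (b : P) < (a : P))

variable {P}

/-- A simple multifraction on the interval monoid: each entry is a proper interval, and
consecutive entries share their target (at positive positions) or source (at negative ones). -/
def MfSimple (a : Multifraction (IntervalMonoid P)) : Prop :=
  ∃ l : List (Bool × Iv P),
    a.entries = l.map (fun p => (p.1, intv p.2)) ∧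
    (∀ p ∈ l, p.2.1.1 ≠ p.2.1.2) ∧
    l.Chain' fun p q => if p.1 then p.2.1.2 = q.2.1.2 else p.2.1.1 = q.2.1.1

/-- A positive `n`-zigzag in `P`. -/
def PosZigzag (n : ℕ) (x : ℕ → P) : Prop :=
  ∀ i ≤ n, i % 2 = 0 → (1 ≤ i → x i < x (i - 1)) ∧ (i < n → x i < x (i + 1))

/-- A negative `n`-zigzag in `P`. -/
def NegZigzag (n : ℕ) (x : ℕ → P) : Prop :=
  ∀ i ≤ n, i % 2 = 1 → (1 ≤ i → x i < x (i - 1)) ∧ (i < n → x i < x (i + 1))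

/-- The zigzag `x` is simple: `x₁, ..., xₙ` are pairwise distinct. -/
def SimpleZz (n : ℕ) (x : ℕ → P) : Prop :=
  ∀ i j, 1 ≤ i → i < j → j ≤ n → x i ≠ x j

/-- Reducibility of a zigzag at level `i`. -/
def ZzRedAt (n : ℕ) (x : ℕ → P) (i : ℕ) : Prop :=
  1 ≤ i ∧ i < n ∧
  ((2 ≤ i ∧ x i < x (i + 1) ∧
      ∃ y, x i < y ∧ y ≤ x (i + 1) ∧ ∃ u, x (i - 1) ≤ u ∧ y ≤ u) ∨
   (2 ≤ i ∧ x (i + 1) < x i ∧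
      ∃ y, x (i + 1) ≤ y ∧ y < x i ∧ ∃ u, u ≤ x (i - 1) ∧ u ≤ y) ∨
   (i = 1 ∧ x 0 < x 1 ∧ ∃ y, x 0 ≤ y ∧ y < x 1 ∧ x 2 ≤ y) ∨
   (i = 1 ∧ x 1 < x 0 ∧ ∃ y, x 1 < y ∧ y ≤ x 0 ∧ y ≤ x 2))

/-- A zigzag is reducible if it is reducible at some level. -/
def ZzReducible (n : ℕ) (x : ℕ → P) : Prop := ∃ i, ZzRedAt n x i

/-- The multifraction `a` is the image of the positive `n`-zigzag `x` under the map `F`. -/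
def PosImage (n : ℕ) (x : ℕ → P) (a : Multifraction (IntervalMonoid P)) : Prop :=
  a.entries.length = n ∧ ∀ j < n,
    if j % 2 = 0 then
      ∃ h : x j ≤ x (j + 1), a.entries[j]? = some (true, intv ⟨(x j, x (j + 1)), h⟩)
    else
      ∃ h : x (j + 1) ≤ x j, a.entries[j]? = some (false, intv ⟨(x (j + 1), x j), h⟩)

/-- The multifraction `a` is the image of the negative `n`-zigzag `x` under the map `F`. -/
def NegImage (n : ℕ) (x : ℕ → P) (a : Multifraction (IntervalMonoid P)) : Prop :=
  a.entries.length = n ∧ ∀ j < n,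
    if j % 2 = 0 then
      ∃ h : x (j + 1) ≤ x j, a.entries[j]? = some (false, intv ⟨(x (j + 1), x j), h⟩)
    else
      ∃ h : x j ≤ x (j + 1), a.entries[j]? = some (true, intv ⟨(x j, x (j + 1)), h⟩)

end Interval

/-!
A zigzag is the same thing as its list of steps `[xⱼ, xⱼ₊₁]`, each traversed upwards or
downwards with alternating orientations, and a simple multifraction is exactly such a list of
proper intervals in which each step ends where the next one starts. What remains is that distinct
proper intervals are distinct in `Int(P)`: every map `g : P → G` to a group induces a
homomorphism `[u, v] ↦ g(u)⁻¹ g(v)` on `Int(P)`, and indicator functions of points separate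
proper intervals. The same homomorphisms evaluate the multifraction of a zigzag to the
telescoping product `g(x₀)⁻¹ g(xₙ)`; when the multifraction is unital, they factor through the
enveloping group, so this product is `1` for every `g`, which forces `xₙ = x₀`.
-/

theorem List.prod_eq_inv_mul_of_getElem {G : Type*} [Group G] {L : List G} {g : ℕ → G}
    (h : ∀ j (hj : j < L.length), L[j] = (g j)⁻¹ * g (j + 1)) :
    L.prod = (g 0)⁻¹ * g L.length := by
  have hL : L = (List.range L.length).map fun k => (g k)⁻¹ / (g (k + 1))⁻¹ :=
    List.ext_getElem (by simp) (by simp [h])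
  conv_lhs => rw [hL, List.prod_range_div']
  simp [div_eq_mul_inv]

theorem List.exists_getElem_eq_of_isChain {α : Type*} :
    ∀ {L : List (α × α)}, L.IsChain (fun p q => p.2 = q.1) → L ≠ [] →
      ∃ x : ℕ → α, ∀ j (hj : j < L.length), L[j] = (x j, x (j + 1))
  | [p], _, _ => ⟨fun j => if j = 0 then p.1 else p.2, by simp⟩
  | p :: q :: t, hL, _ => by
    obtain ⟨x, hx⟩ := exists_getElem_eq_of_isChain (L := q :: t) hL.tail (List.cons_ne_nil _ _)
    refine ⟨fun j => Nat.casesOn j p.1 x, ?_⟩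
    rintro (_ | j) hj
    · have hp : p.2 = (q :: t)[0].1 := (List.isChain_cons_cons.mp hL).1
      rw [hx 0 (by simp)] at hp
      exact Prod.ext rfl hp
    · exact hx j _

def altSign (b : Bool) (j : ℕ) : Bool := if j % 2 = 0 then b else !b

@[simp]
theorem altSign_not (b : Bool) (j : ℕ) : altSign (!b) j = !altSign b j := by
  unfold altSign
  split_ifs <;> rfl

@[simp]
theorem altSign_succ (b : Bool) (j : ℕ) : altSign b (j + 1) = !altSign b j := by
  unfold altSign
  split_ifs <;> first | omega | simp

theorem List.getElem_eq_altSign :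
    ∀ {l : List Bool} {b : Bool}, l.IsChain (· ≠ ·) → l.head? = some b →
      ∀ j (hj : j < l.length), l[j] = altSign b j
  | _ :: _, _, _, hb, 0, _ => Option.some.inj hb
  | [_], _, _, _, _ + 1, hj => by simp at hj
  | c :: d :: t, b, hl, hb, j + 1, hj => by
    obtain rfl : c = b := Option.some.inj hb
    have hdc : d = !c := by
      cases c <;> cases d <;> simp_all
    rw [altSign_succ, ← altSign_not, ← hdc]
    exact getElem_eq_altSign hl.tail rfl j _

theorem Multifraction.getElem_fst_eq_altSign {M : Type*} [Monoid M] (a : Multifraction M)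
    {p : Bool × M} (hp : a.entries.head? = some p) (j : ℕ) (hj : j < a.entries.length) :
    a.entries[j].1 = altSign p.1 j := by
  have hchain : (a.entries.map Prod.fst).IsChain (· ≠ ·) := (List.isChain_map _).mpr a.alt
  rw [← List.getElem_map Prod.fst (h := by simpa using hj)]
  exact List.getElem_eq_altSign hchain (by simp [hp]) j _

theorem mfEval_comp {M G H : Type*} [Monoid M] [Group G] [Group H] (η : M →* G)
    (k : G →* H) (a : Multifraction M) : mfEval (k.comp η) a = k (mfEval η a) := by
  unfold mfEval
  rw [map_list_prod, List.map_map]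
  refine congrArg _ (List.map_congr_left fun p _ => ?_)
  by_cases hp : p.1 <;> simp [hp]

section Potential

variable {P : Type*} [PartialOrder P] {G : Type*} [Group G]

def potentialHom (g : P → G) : IntervalMonoid P →* G :=
  Con.lift _ (FreeMonoid.lift fun I : Iv P => (g I.1.1)⁻¹ * g I.1.2) <| Con.conGen_le.mpr <| by
    rintro u v (⟨x, y, z, hxy, hyz, rfl, rfl⟩ | ⟨x, rfl, rfl⟩) <;> rw [Con.ker_rel]
    · show (g x)⁻¹ * g z = (g x)⁻¹ * g y * ((g y)⁻¹ * g z)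
      group
    · exact inv_mul_cancel (g x)

@[simp]
theorem potentialHom_intv (g : P → G) (I : Iv P) :
    potentialHom g (intv I) = (g I.1.1)⁻¹ * g I.1.2 :=
  (Con.lift_mk' _ _).trans (FreeMonoid.lift_eval_of _ _)

theorem injOn_intv : Set.InjOn (intv (P := P)) {I | I.1.1 ≠ I.1.2} := by
  classical
  rintro ⟨⟨u, v⟩, _⟩ (huv : u ≠ v) ⟨⟨u', v'⟩, _⟩ (hu'v' : u' ≠ v') h
  have key (f : P → ℤ) : f v - f u = f v' - f u' := by
    have := (potentialHom_intv (Multiplicative.ofAdd ∘ f) _).symm.trans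
      ((congrArg (potentialHom (Multiplicative.ofAdd ∘ f)) h).trans (potentialHom_intv _ _))
    simpa [sub_eq_neg_add] using congrArg Multiplicative.toAdd this
  have hv := key fun p => if p = v then 1 else 0
  have hu := key fun p => if p = u then 1 else 0
  simp only [if_neg huv, if_neg huv.symm] at hv hu
  refine Subtype.ext (Prod.ext ?_ ?_) <;> dsimp only <;> split_ifs at hv hu <;>
    first | omega | simp_all

end Potential

namespace Iv

variable {P : Type*} [PartialOrder P]

/-- The endpoints of `I` in the order in which a zigzag step runs through it. -/
def orient (s : Bool) (I : Iv P) : P × P := if s then I.1 else I.1.swap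

theorem exists_orient_eq {s : Bool} {u v : P} (h : if s then u < v else v < u) :
    ∃ I : Iv P, I.1.1 ≠ I.1.2 ∧ I.orient s = (u, v) := by
  cases s
  · exact ⟨⟨(v, u), (h : v < u).le⟩, h.ne, rfl⟩
  · exact ⟨⟨(u, v), (h : u < v).le⟩, h.ne, rfl⟩

theorem orient_lt {s : Bool} {I : Iv P} (hI : I.1.1 ≠ I.1.2) :
    if s then (I.orient s).1 < (I.orient s).2 else (I.orient s).2 < (I.orient s).1 := by
  cases s <;> exact lt_of_le_of_ne I.2 hI

theorem ne_of_orient_ne {s : Bool} {I : Iv P} (h : (I.orient s).1 ≠ (I.orient s).2) :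
    I.1.1 ≠ I.1.2 := by
  cases s
  exacts [h.symm, h]

theorem matching_iff_orient_snd_eq {s : Bool} {I J : Iv P} :
    (if s then I.1.2 = J.1.2 else I.1.1 = J.1.1) ↔ (I.orient s).2 = (J.orient !s).1 := by
  cases s <;> rfl

theorem exists_intv_orient_eq_iff (e : Option (Bool × IntervalMonoid P)) (s : Bool) (u v : P) :
    (∃ I : Iv P, e = some (s, intv I) ∧ I.orient s = (u, v)) ↔
      if s then ∃ h : u ≤ v, e = some (true, intv ⟨(u, v), h⟩)
      else ∃ h : v ≤ u, e = some (false, intv ⟨(v, u), h⟩) := by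
  cases s <;> exact ⟨fun ⟨⟨_, hpq⟩, he, ho⟩ => by cases ho; exact ⟨hpq, he⟩,
    fun ⟨h, he⟩ => ⟨⟨_, h⟩, he, rfl⟩⟩

theorem potentialHom_orient {G : Type*} [Group G] (g : P → G) (s : Bool) (I : Iv P) :
    (if s then potentialHom g (intv I) else (potentialHom g (intv I))⁻¹) =
      (g (I.orient s).1)⁻¹ * g (I.orient s).2 := by
  cases s <;> simp [orient]

end Iv

section Zigzag

variable {P : Type*} [PartialOrder P] {b : Bool} {n : ℕ} {x : ℕ → P}

def IsZigzag (b : Bool) (n : ℕ) (x : ℕ → P) : Prop :=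
  ∀ j < n, if altSign b j then x j < x (j + 1) else x (j + 1) < x j

def IsZigzagImage (b : Bool) (n : ℕ) (x : ℕ → P) (a : Multifraction (IntervalMonoid P)) :
    Prop :=
  a.entries.length = n ∧ ∀ j < n, ∃ I : Iv P,
    a.entries[j]? = some (altSign b j, intv I) ∧ I.orient (altSign b j) = (x j, x (j + 1))

theorem isZigzag_iff_valleys :
    IsZigzag b n x ↔ ∀ i ≤ n, altSign b i = true →
      (1 ≤ i → x i < x (i - 1)) ∧ (i < n → x i < x (i + 1)) := by
  constructor
  · intro h i hi hs
    refine ⟨fun h1 => ?_, fun h2 => by simpa [hs] using h i h2⟩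
    obtain ⟨j, rfl⟩ : ∃ j, i = j + 1 := ⟨i - 1, by omega⟩
    simp only [altSign_succ, Bool.not_eq_eq_eq_not, Bool.not_true] at hs
    simpa [hs] using h j (by omega)
  · intro h j hj
    cases hs : altSign b j
    · simpa using (h (j + 1) hj (by simp [hs])).1 (by omega)
    · simpa using (h j hj.le hs).2 hj

theorem posZigzag_iff : PosZigzag n x ↔ IsZigzag true n x := by
  simp [PosZigzag, isZigzag_iff_valleys, altSign]

theorem negZigzag_iff : NegZigzag n x ↔ IsZigzag false n x := by
  simp [NegZigzag, isZigzag_iff_valleys, altSign]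

theorem posImage_iff {a : Multifraction (IntervalMonoid P)} :
    PosImage n x a ↔ IsZigzagImage true n x a := by
  refine and_congr_right fun _ => forall₂_congr fun j _ => ?_
  rw [Iv.exists_intv_orient_eq_iff]
  by_cases hp : j % 2 = 0 <;> simp [altSign, hp]

theorem negImage_iff {a : Multifraction (IntervalMonoid P)} :
    NegImage n x a ↔ IsZigzagImage false n x a := by
  refine and_congr_right fun _ => forall₂_congr fun j _ => ?_
  rw [Iv.exists_intv_orient_eq_iff]
  by_cases hp : j % 2 = 0 <;> simp [altSign, hp]

theorem IsZigzag.ne (hx : IsZigzag b n x) {j : ℕ} (hj : j < n) : x j ≠ x (j + 1) := by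
  have := hx j hj
  split_ifs at this
  exacts [this.ne, this.ne']

theorem IsZigzag.exists_image_simple (hx : IsZigzag b n x) :
    ∃ a : Multifraction (IntervalMonoid P), IsZigzagImage b n x a ∧ MfSimple a := by
  choose I hI hIx using fun j : Fin n => Iv.exists_orient_eq (hx j j.2)
  let l := List.ofFn fun j : Fin n => (altSign b j, I j)
  have hsign : l.IsChain fun p q => p.1 ≠ q.1 := List.isChain_ofFn.mpr fun i hi => by simp
  refine ⟨⟨l.map fun p => (p.1, intv p.2), (List.isChain_map _).mpr hsign⟩,
    ⟨by simp [l], fun j hj => ⟨I ⟨j, hj⟩, by simp [l, hj], hIx ⟨j, hj⟩⟩⟩, l, rfl, ?_, ?_⟩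
  · simpa [l] using hI
  · refine List.isChain_ofFn.mpr fun i hi => Iv.matching_iff_orient_snd_eq.mpr ?_
    have h2 := hIx ⟨i + 1, hi⟩
    rw [altSign_succ] at h2
    dsimp only at h2 ⊢
    rw [hIx ⟨i, by omega⟩, h2]

theorem IsZigzagImage.getElem_eq {a : Multifraction (IntervalMonoid P)}
    (ha : IsZigzagImage b n x a) {j : ℕ} (hj : j < n) :
    ∃ I : Iv P, a.entries[j]'(ha.1 ▸ hj) = (altSign b j, intv I) ∧
      I.orient (altSign b j) = (x j, x (j + 1)) := by
  obtain ⟨I, hI, hIx⟩ := ha.2 j hj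
  exact ⟨I, by simpa [List.getElem?_eq_getElem (ha.1 ▸ hj)] using hI, hIx⟩

theorem IsZigzagImage.eq_of_isZigzag {y : ℕ → P} {a : Multifraction (IntervalMonoid P)}
    (hn : 1 ≤ n) (hx : IsZigzag b n x) (hy : IsZigzag b n y) (ha : IsZigzagImage b n x a)
    (hb : IsZigzagImage b n y a) : ∀ i ≤ n, x i = y i := by
  have hstep : ∀ j < n, (x j, x (j + 1)) = (y j, y (j + 1)) := by
    intro j hj
    obtain ⟨I, hIa, hIx⟩ := ha.getElem_eq hj
    obtain ⟨J, hJb, hJy⟩ := hb.getElem_eq hj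
    have hIJ : intv I = intv J := congrArg Prod.snd (hIa.symm.trans hJb)
    have hI := Iv.ne_of_orient_ne (by rw [hIx]; exact hx.ne hj)
    have hJ := Iv.ne_of_orient_ne (by rw [hJy]; exact hy.ne hj)
    rw [← hIx, ← hJy, injOn_intv hI hJ hIJ]
  intro i hi
  rcases hi.lt_or_eq with hi | rfl
  · exact congrArg Prod.fst (hstep i hi)
  · simpa [Nat.sub_add_cancel hn] using congrArg Prod.snd (hstep (i - 1) (by omega))

theorem MfSimple.exists_isZigzag {a : Multifraction (IntervalMonoid P)} (hs : MfSimple a)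
    (hlen : a.entries.length = n) (hhead : ∃ p, a.entries.head? = some p ∧ p.1 = b) :
    ∃ x : ℕ → P, IsZigzag b n x ∧ IsZigzagImage b n x a := by
  obtain ⟨l, hl, hproper, hlink⟩ := hs
  obtain ⟨p, hp, rfl⟩ := hhead
  have hl_len : l.length = n := by simpa [hl] using hlen
  have hsign (j : ℕ) (hj : j < l.length) : l[j].1 = altSign p.1 j := by
    simpa [hl] using a.getElem_fst_eq_altSign hp j (by simpa [hl] using hj)
  let L := l.map fun q => q.2.orient q.1
  have hL : L.IsChain fun u v => u.2 = v.1 := by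
    refine List.isChain_map _ |>.mpr <| List.isChain_iff_getElem.mpr fun i hi => ?_
    have hnext : l[i + 1].1 = !l[i].1 := by rw [hsign, hsign, altSign_succ]
    rw [hnext]
    exact Iv.matching_iff_orient_snd_eq.mp (List.isChain_iff_getElem.mp hlink i hi)
  obtain ⟨x, hx⟩ := List.exists_getElem_eq_of_isChain hL (by
    rintro hnil
    simp [L] at hnil
    simp [hl, hnil] at hp)
  simp only [L, List.length_map, List.getElem_map] at hx
  have hstep (j : ℕ) (hj : j < n) : l[j].2.orient (altSign p.1 j) = (x j, x (j + 1)) := by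
    rw [← hsign j (by omega), hx j (by omega)]
  refine ⟨x, fun j hj => ?_, hlen, fun j hj => ⟨l[j].2, ?_, hstep j hj⟩⟩
  · have hj' : j < l.length := by omega
    have := Iv.orient_lt (s := altSign p.1 j) (hproper _ (List.getElem_mem hj'))
    rwa [hstep j hj] at this
  · rw [hl, List.getElem?_map, List.getElem?_eq_getElem (by omega), Option.map_some,
      hsign j (by omega)]

theorem IsZigzagImage.mfEval_potentialHom {G : Type*} [Group G] (g : P → G)
    {a : Multifraction (IntervalMonoid P)} (ha : IsZigzagImage b n x a) :
    mfEval (potentialHom g) a = (g (x 0))⁻¹ * g (x n) := by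
  rw [mfEval, List.prod_eq_inv_mul_of_getElem (g := fun j => g (x j)), List.length_map, ha.1]
  intro j hj
  obtain ⟨I, hIa, hIx⟩ := ha.getElem_eq (by simpa [ha.1] using hj)
  simp only [List.getElem_map, hIa, Iv.potentialHom_orient, hIx]

theorem IsZigzagImage.closed_of_unital {a : Multifraction (IntervalMonoid P)}
    (ha : IsZigzagImage b n x a) {G : Type*} [Group G] {η : IntervalMonoid P →* G}
    (henv : IsEnvelopingGroup (IntervalMonoid P) G η) (hunital : mfEval η a = 1) :
    x n = x 0 := by
  classical
  let g : P → ULift (Multiplicative ℤ) := fun p => ⟨.ofAdd (if p = x 0 then 1 else 0)⟩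
  obtain ⟨k, hk, -⟩ := henv _ (potentialHom g)
  have h : (g (x 0))⁻¹ * g (x n) = 1 := by
    rw [← ha.mfEval_potentialHom g, ← hk, mfEval_comp, hunital, map_one]
  by_contra hne
  simp [g, hne, ULift.ext_iff] at h

end Zigzag
theorem zigzag_multifraction_correspondence_general (P : Type*) [PartialOrder P]
    (n : ℕ) (hn : 1 ≤ n) :
    (∀ x : ℕ → P, PosZigzag n x →
      ∃ a : Multifraction (IntervalMonoid P), PosImage n x a ∧ MfSimple a) ∧
    (∀ x y : ℕ → P, PosZigzag n x → PosZigzag n y →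
      ∀ a : Multifraction (IntervalMonoid P), PosImage n x a → PosImage n y a →
        ∀ i ≤ n, x i = y i) ∧
    (∀ a : Multifraction (IntervalMonoid P), MfSimple a → a.entries.length = n →
      (∃ p, a.entries.head? = some p ∧ p.1 = true) →
      ∃ x : ℕ → P, PosZigzag n x ∧ PosImage n x a) ∧
    (∀ x : ℕ → P, NegZigzag n x →
      ∃ a : Multifraction (IntervalMonoid P), NegImage n x a ∧ MfSimple a) ∧
    (∀ x y : ℕ → P, NegZigzag n x → NegZigzag n y →
      ∀ a : Multifraction (IntervalMonoid P), NegImage n x a → NegImage n y a →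
        ∀ i ≤ n, x i = y i) ∧
    (∀ a : Multifraction (IntervalMonoid P), MfSimple a → a.entries.length = n →
      (∃ p, a.entries.head? = some p ∧ p.1 = false) →
      ∃ x : ℕ → P, NegZigzag n x ∧ NegImage n x a) ∧
    (∀ (x : ℕ → P) (a : Multifraction (IntervalMonoid P)),
      (PosZigzag n x ∧ PosImage n x a) ∨ (NegZigzag n x ∧ NegImage n x a) →
      ∀ (G : Type*) [Group G] (η : IntervalMonoid P →* G),
        IsEnvelopingGroup (IntervalMonoid P) G η → mfEval η a = 1 → x n = x 0) := by
  simp only [posZigzag_iff, negZigzag_iff, posImage_iff, negImage_iff]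
  refine ⟨fun x hx => hx.exists_image_simple,
    fun x y hx hy a ha hb => ha.eq_of_isZigzag hn hx hy hb,
    fun a hs hlen hhead => hs.exists_isZigzag hlen hhead,
    fun x hx => hx.exists_image_simple,
    fun x y hx hy a ha hb => ha.eq_of_isZigzag hn hx hy hb,
    fun a hs hlen hhead => hs.exists_isZigzag hlen hhead, ?_⟩
  rintro x a (⟨-, ha⟩ | ⟨-, ha⟩) G _ η henv hunital <;> exact ha.closed_of_unital henv hunital

/-- The map `F` is a bijective correspondence between positive (resp. negative) `n`-zigzags
in `P` and simple positive (resp. negative) `n`-multifractions on `Int(P)`; moreover, if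
the associated multifraction is unital then the zigzag is closed. -/
theorem zigzag_multifraction_correspondence (P : Type*) [PartialOrder P]
    (hP : LocalLattice P) (n : ℕ) (hn : 1 ≤ n) :
    (∀ x : ℕ → P, PosZigzag n x →
      ∃ a : Multifraction (IntervalMonoid P), PosImage n x a ∧ MfSimple a) ∧
    (∀ x y : ℕ → P, PosZigzag n x → PosZigzag n y →
      ∀ a : Multifraction (IntervalMonoid P), PosImage n x a → PosImage n y a →
        ∀ i ≤ n, x i = y i) ∧
    (∀ a : Multifraction (IntervalMonoid P), MfSimple a → a.entries.length = n →
      (∃ p, a.entries.head? = some p ∧ p.1 = true) →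
      ∃ x : ℕ → P, PosZigzag n x ∧ PosImage n x a) ∧
    (∀ x : ℕ → P, NegZigzag n x →
      ∃ a : Multifraction (IntervalMonoid P), NegImage n x a ∧ MfSimple a) ∧
    (∀ x y : ℕ → P, NegZigzag n x → NegZigzag n y →
      ∀ a : Multifraction (IntervalMonoid P), NegImage n x a → NegImage n y a →
        ∀ i ≤ n, x i = y i) ∧
    (∀ a : Multifraction (IntervalMonoid P), MfSimple a → a.entries.length = n →
      (∃ p, a.entries.head? = some p ∧ p.1 = false) →
      ∃ x : ℕ → P, NegZigzag n x ∧ NegImage n x a) ∧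
    (∀ (x : ℕ → P) (a : Multifraction (IntervalMonoid P)),
      (PosZigzag n x ∧ PosImage n x a) ∨ (NegZigzag n x ∧ NegImage n x a) →
      ∀ (G : Type*) [Group G] (η : IntervalMonoid P →* G),
        IsEnvelopingGroup (IntervalMonoid P) G η → mfEval η a = 1 → x n = x 0) :=
  zigzag_multifraction_correspondence_general P n hn
end

section
/- Let P be a finite local lattice such that every simple closed zigzag x̄ in P admits an interpolation center, i.e., an element y with xᵢ ≤ y ≤ xⱼ for all entries xᵢ, xⱼ of x̄ with xᵢ < xⱼ. Then every simple closed n-zigzag with n ≥ 4 in P is reducible. -/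
/-! Take an interpolation center `y` of the zigzag itself. For a positive zigzag, `y` lies
above `x₀` and `x₂` and below `x₁`. If `y ≠ x₁`, then `y` witnesses reducibility at level 1.
If `y = x₁`, then `x₂ < x₃` forces `x₁ ≤ x₃`, so `x₁` witnesses reducibility at level 2.
Negative zigzags are dual. -/

section Zigzag

variable {P : Type*} [PartialOrder P] {n : ℕ} {x : ℕ → P}

def IsInterpolationCenter (n : ℕ) (x : ℕ → P) (y : P) : Prop :=
  ∀ i ≤ n, ∀ j ≤ n, x i < x j → x i ≤ y ∧ y ≤ x j

namespace PosZigzag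

theorem zero_lt_one (hz : PosZigzag n x) (hn : 1 ≤ n) : x 0 < x 1 :=
  (hz 0 (by omega) rfl).2 (by omega)

theorem two_lt_one (hz : PosZigzag n x) (hn : 2 ≤ n) : x 2 < x 1 := (hz 2 hn rfl).1 (by omega)

theorem two_lt_three (hz : PosZigzag n x) (hn : 3 ≤ n) : x 2 < x 3 :=
  (hz 2 (by omega) rfl).2 (by omega)

theorem zzReducible_of_isInterpolationCenter (hz : PosZigzag n x) (hn : 3 ≤ n) {y : P}
    (hy : IsInterpolationCenter n x y) : ZzReducible n x := by
  have h01 := hz.zero_lt_one (by omega)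
  have h21 := hz.two_lt_one (by omega)
  have h23 := hz.two_lt_three hn
  obtain ⟨hy0, hy1⟩ := hy 0 (by omega) 1 (by omega) h01
  have hy2 : x 2 ≤ y := (hy 2 (by omega) 1 (by omega) h21).1
  obtain rfl | hy1 := hy1.eq_or_lt
  · have h13 : x 1 ≤ x 3 := (hy 2 (by omega) 3 hn h23).2
    exact ⟨2, by omega, by omega,
      .inl ⟨le_rfl, h23, x 1, h21, h13, x 1, le_rfl, le_rfl⟩⟩
  · exact ⟨1, le_rfl, by omega, .inr <| .inr <| .inl ⟨rfl, h01, y, hy0, hy1, hy2⟩⟩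

end PosZigzag

namespace NegZigzag

theorem one_lt_zero (hz : NegZigzag n x) (hn : 1 ≤ n) : x 1 < x 0 := (hz 1 hn rfl).1 le_rfl

theorem one_lt_two (hz : NegZigzag n x) (hn : 2 ≤ n) : x 1 < x 2 :=
  (hz 1 (by omega) rfl).2 (by omega)

theorem three_lt_two (hz : NegZigzag n x) (hn : 3 ≤ n) : x 3 < x 2 := (hz 3 hn rfl).1 (by omega)

theorem zzReducible_of_isInterpolationCenter (hz : NegZigzag n x) (hn : 3 ≤ n) {y : P}
    (hy : IsInterpolationCenter n x y) : ZzReducible n x := by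
  have h10 := hz.one_lt_zero (by omega)
  have h12 := hz.one_lt_two (by omega)
  have h32 := hz.three_lt_two hn
  obtain ⟨hy1, hy0⟩ := hy 1 (by omega) 0 (by omega) h10
  have hy2 : y ≤ x 2 := (hy 1 (by omega) 2 (by omega) h12).2
  obtain rfl | hy1 := hy1.eq_or_lt
  · have h31 : x 3 ≤ x 1 := (hy 3 hn 2 (by omega) h32).1
    exact ⟨2, by omega, by omega,
      .inr <| .inl ⟨le_rfl, h32, x 1, h31, h12, x 1, le_rfl, le_rfl⟩⟩
  · exact ⟨1, le_rfl, by omega, .inr <| .inr <| .inr ⟨rfl, h10, y, hy1, hy0, hy2⟩⟩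

end NegZigzag

end Zigzag

theorem zigzag_reducible_of_interpolation_general (P : Type*) [PartialOrder P]
    (hint : ∀ (n : ℕ) (x : ℕ → P), 1 ≤ n → (PosZigzag n x ∨ NegZigzag n x) →
      x n = x 0 → SimpleZz n x →
      ∃ y : P, ∀ i ≤ n, ∀ j ≤ n, x i < x j → x i ≤ y ∧ y ≤ x j) :
    ∀ (n : ℕ) (x : ℕ → P), 4 ≤ n → (PosZigzag n x ∨ NegZigzag n x) →
      x n = x 0 → SimpleZz n x → ZzReducible n x := by
  intro n x hn hz hcl hs
  obtain ⟨y, hy⟩ := hint n x (by omega) hz hcl hs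
  rcases hz with hz | hz
  · exact hz.zzReducible_of_isInterpolationCenter (by omega) hy
  · exact hz.zzReducible_of_isInterpolationCenter (by omega) hy

/-- If every simple closed zigzag of the finite local lattice `P` admits an interpolation
center, then every simple closed `n`-zigzag with `n ≥ 4` is reducible. -/
theorem zigzag_reducible_of_interpolation (P : Type*) [PartialOrder P] [Finite P]
    (hP : LocalLattice P)
    (hint : ∀ (n : ℕ) (x : ℕ → P), 1 ≤ n → (PosZigzag n x ∨ NegZigzag n x) →
      x n = x 0 → SimpleZz n x →
      ∃ y : P, ∀ i ≤ n, ∀ j ≤ n, x i < x j → x i ≤ y ∧ y ≤ x j) :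
    ∀ (n : ℕ) (x : ℕ → P), 4 ≤ n → (PosZigzag n x ∨ NegZigzag n x) →
      x n = x 0 → SimpleZz n x → ZzReducible n x :=
  zigzag_reducible_of_interpolation_general P hint
end

section
/- In the monoid M_B presented by the generators [x,y] for x ⊆ y in the poset P_B = (𝒫({1,2,3,4}) ∖ {∅, {1,2,3,4}}, ⊆), subject to all interval-monoid relations [x,z]=[x,y][y,z] for x ⊆ y ⊆ z except the single relation [{1},{1,2}][{1,2},{1,2,3}] = [{1},{1,3}][{1,3},{1,2,3}], the deleted relation nevertheless holds in the enveloping group of M_B; consequently M_B does not embed into its enveloping group. -/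
section PropB

/-- The poset `P_B` of proper nonempty subsets of a 4-element set, under inclusion. -/
def PB : Type := {S : Finset (Fin 4) // S.Nonempty ∧ S ≠ Finset.univ}

instance : PartialOrder PB := inferInstanceAs (PartialOrder {S : Finset (Fin 4) // _})

/-- The element `{1}` of `P_B`. -/
def s1 : PB := ⟨{1}, by decide⟩
/-- The element `{1,2}` of `P_B`. -/
def s12 : PB := ⟨{1, 2}, by decide⟩
/-- The element `{1,3}` of `P_B`. -/
def s13 : PB := ⟨{1, 3}, by decide⟩
/-- The element `{1,2,3}` of `P_B`. -/
def s123 : PB := ⟨{1, 2, 3}, by decide⟩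

lemma h1_12 : s1 ≤ s12 := Subtype.mk_le_mk.mpr (by decide)
lemma h1_13 : s1 ≤ s13 := Subtype.mk_le_mk.mpr (by decide)
lemma h12_123 : s12 ≤ s123 := Subtype.mk_le_mk.mpr (by decide)
lemma h13_123 : s13 ≤ s123 := Subtype.mk_le_mk.mpr (by decide)

/-- The defining relations of `M_B`: all interval relations of `P_B`, except that the
chains `{1} ⊆ {1,2} ⊆ {1,2,3}` and `{1} ⊆ {1,3} ⊆ {1,2,3}` (whence the relation
`[{1},{1,2}][{1,2},{1,2,3}] = [{1},{1,3}][{1,3},{1,2,3}]`) are deleted. -/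
def mbRel : FreeMonoid (Iv PB) → FreeMonoid (Iv PB) → Prop := fun u v =>
  (∃ (x y z : PB) (hxy : x ≤ y) (hyz : y ≤ z),
      ¬(x = s1 ∧ z = s123 ∧ (y = s12 ∨ y = s13)) ∧
      u = FreeMonoid.of ⟨(x, z), hxy.trans hyz⟩ ∧
      v = FreeMonoid.of ⟨(x, y), hxy⟩ * FreeMonoid.of ⟨(y, z), hyz⟩) ∨
  (∃ x : PB, u = FreeMonoid.of ⟨(x, x), le_refl x⟩ ∧ v = 1)

/-- The monoid `M_B`. -/
def MB : Type := (conGen mbRel).Quotient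

instance : Monoid MB := inferInstanceAs (Monoid (conGen mbRel).Quotient)

/-- The generators of `M_B`. -/
def mbGen (I : Iv PB) : MB := (conGen mbRel).mk' (FreeMonoid.of I)


/-!
In `M_B` the deleted relation fails: `M_B` acts on `Option (P_B × Bool)` by letting `[x, y]`
move a marker from `y` down to `x` inside `↓{1,2,3}` and flip the bit on the step
`[{1}, {1,2}]`. Every surviving relation holds for this action, and the two sides of the
deleted one send `({1,2,3}, false)` to `({1}, true)` and `({1}, false)` respectively.

In a group the deleted relation holds: the order complex of `P_B` is a 2-sphere, and the loop
`{1} → {1,2} → {1,2,3} ← {1,3} ← {1}` bounding the two deleted triangles also bounds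
the rest of the sphere, across which it contracts using surviving relations only, passing through
`{1,4}`, `{4}`, `{2,3,4}` and `{2,3}`.
-/

instance : DecidableEq PB := Subtype.instDecidableEq
instance : Fintype PB := Subtype.fintype _
instance : DecidableLE PB := fun a b => inferInstanceAs (Decidable (a.1 ⊆ b.1))
instance : DecidableLT PB := decidableLTOfDecidableLE

def s2 : PB := ⟨{2}, by decide⟩
def s3 : PB := ⟨{3}, by decide⟩
def s4 : PB := ⟨{4}, by decide⟩
def s14 : PB := ⟨{1, 4}, by decide⟩
def s23 : PB := ⟨{2, 3}, by decide⟩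
def s24 : PB := ⟨{2, 4}, by decide⟩
def s34 : PB := ⟨{3, 4}, by decide⟩
def s124 : PB := ⟨{1, 2, 4}, by decide⟩
def s134 : PB := ⟨{1, 3, 4}, by decide⟩
def s234 : PB := ⟨{2, 3, 4}, by decide⟩

namespace MB

abbrev IsDeletedTriple (x y z : PB) : Prop := x = s1 ∧ z = s123 ∧ (y = s12 ∨ y = s13)

def lift {N : Type*} [Monoid N] (f : Iv PB → N) (hrefl : ∀ x, f ⟨(x, x), le_refl x⟩ = 1)
    (htrans : ∀ (x y z : PB) (hxy : x ≤ y) (hyz : y ≤ z),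
      ¬IsDeletedTriple x y z →
      f ⟨(x, z), hxy.trans hyz⟩ = f ⟨(x, y), hxy⟩ * f ⟨(y, z), hyz⟩) :
    MB →* N :=
  Con.lift _ (FreeMonoid.lift f) <| Con.conGen_le.mpr fun u v => by
    rintro (⟨x, y, z, hxy, hyz, hne, rfl, rfl⟩ | ⟨x, rfl, rfl⟩)
    · rw [Con.ker_rel, map_mul]
      exact htrans x y z hxy hyz hne
    · rw [Con.ker_rel, map_one]
      exact hrefl x

def gen (x y : PB) : MB := if h : x ≤ y then mbGen ⟨(x, y), h⟩ else 1

theorem gen_of_le {x y : PB} (h : x ≤ y) : gen x y = mbGen ⟨(x, y), h⟩ := dif_pos h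

theorem gen_trans (x y z : PB)
    (h : x ≤ y ∧ y ≤ z ∧ ¬IsDeletedTriple x y z := by decide) :
    gen x z = gen x y * gen y z := by
  obtain ⟨hxy, hyz, hne⟩ := h
  rw [gen_of_le hxy, gen_of_le hyz, gen_of_le (hxy.trans hyz)]
  exact (Con.eq _).mpr (ConGen.Rel.of _ _ (Or.inl ⟨x, y, z, hxy, hyz, hne, rfl, rfl⟩))

theorem map_deletedRelation {G : Type*} [Group G] (φ : MB →* G) :
    φ (gen s1 s12 * gen s12 s123) = φ (gen s1 s13 * gen s13 s123) := by
  let g x y := φ (gen x y)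
  have hg (x y z : PB) (h : x ≤ y ∧ y ≤ z ∧ ¬IsDeletedTriple x y z := by decide) :
      g x z = g x y * g y z :=
    (congrArg φ (gen_trans x y z h)).trans (map_mul φ _ _)
  rw [map_mul, map_mul]
  calc g s1 s12 * g s12 s123
      = g s1 s124 * (g s2 s124)⁻¹ * g s2 s123 := by
        rw [hg s1 s12 s124, hg s2 s12 s124, hg s2 s12 s123]; group
    _ = g s1 s14 * (g s4 s14)⁻¹ * g s4 s124 * (g s2 s124)⁻¹ * g s2 s123 := by
        rw [hg s1 s14 s124, hg s4 s14 s124]; group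
    _ = g s1 s14 * (g s4 s14)⁻¹ * g s4 s234 * (g s2 s234)⁻¹ * g s2 s123 := by
        rw [hg s4 s24 s124, hg s2 s24 s124, hg s4 s24 s234, hg s2 s24 s234]; group
    _ = g s1 s14 * (g s4 s14)⁻¹ * g s4 s234 * (g s23 s234)⁻¹ * g s23 s123 := by
        rw [hg s2 s23 s234, hg s2 s23 s123]; group
    _ = g s1 s14 * (g s4 s14)⁻¹ * g s4 s234 * (g s3 s234)⁻¹ * g s3 s123 := by
        rw [hg s3 s23 s234, hg s3 s23 s123]; group
    _ = g s1 s14 * (g s4 s14)⁻¹ * g s4 s134 * (g s3 s134)⁻¹ * g s3 s123 := by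
        rw [hg s4 s34 s134, hg s3 s34 s134, hg s4 s34 s234, hg s3 s34 s234]; group
    _ = g s1 s134 * (g s3 s134)⁻¹ * g s3 s123 := by
        rw [hg s1 s14 s134, hg s4 s14 s134]; group
    _ = g s1 s13 * g s13 s123 := by
        rw [hg s1 s13 s134, hg s3 s13 s134, hg s3 s13 s123]; group

theorem isMin_s1 : IsMin s1 := isMin_iff_forall_not_lt.mpr (by decide)
theorem s1_covBy_s12 : s1 ⋖ s12 := ⟨by decide, by decide⟩
theorem s12_covBy_s123 : s12 ⋖ s123 := ⟨by decide, by decide⟩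

def descend (x y : PB) (s : Option (PB × Bool)) : Option (PB × Bool) :=
  if x = y then s else
    s.bind fun p =>
      if p.1 = y ∧ y ≤ s123 then some (x, p.2 ^^ decide (x = s1 ∧ y = s12)) else none

theorem descend_self (x : PB) (s : Option (PB × Bool)) : descend x x s = s := if_pos rfl

theorem descend_trans {x y z : PB} (hxy : x ≤ y) (hyz : y ≤ z)
    (hne : ¬IsDeletedTriple x y z) (s : Option (PB × Bool)) :
    descend x z s = descend x y (descend y z s) := by
  rcases hxy.eq_or_lt with rfl | hxy
  · rw [descend_self]
  rcases hyz.eq_or_lt with rfl | hyz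
  · rw [descend_self]
  have hy : y ≠ s1 := by rintro rfl; exact isMin_s1.not_lt hxy
  have hxz : ¬(x = s1 ∧ z = s12) := by rintro ⟨rfl, rfl⟩; exact s1_covBy_s12.2 hxy hyz
  rcases s with _ | ⟨w, b⟩
  · simp [descend]
  by_cases hw : w = z ∧ z ≤ s123
  · obtain ⟨rfl, hz⟩ := hw
    have hxy12 : ¬(x = s1 ∧ y = s12) := by
      rintro ⟨rfl, rfl⟩
      exact hne ⟨rfl, (s12_covBy_s123.eq_or_eq hyz.le hz).resolve_left hyz.ne', Or.inl rfl⟩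
    simp [descend, hxy.ne, hyz.ne, (hxy.trans hyz).ne, hz, hyz.le.trans hz, hy, hxz, hxy12]
  · simp only [descend, if_neg hxy.ne, if_neg hyz.ne, if_neg (hxy.trans hyz).ne,
      Option.bind_some, if_neg hw, Option.bind_none]

def descendHom : MB →* Function.End (Option (PB × Bool)) :=
  lift (fun I => descend I.1.1 I.1.2) (fun x => funext (descend_self x))
    fun _ _ _ hxy hyz hne => funext (descend_trans hxy hyz hne)

theorem deletedRelation_ne : gen s1 s12 * gen s12 s123 ≠ gen s1 s13 * gen s13 s123 :=
  fun h => absurd (congrFun (congrArg descendHom h) (some (s123, false))) (by decide)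

end MB

/-- The deleted relation holds in the enveloping group of `M_B`; consequently `M_B` does
not embed into its enveloping group. -/
theorem propB :
    ∀ (G : Type*) [Group G] (η : MB →* G), IsEnvelopingGroup MB G η →
      η (mbGen ⟨(s1, s12), h1_12⟩ * mbGen ⟨(s12, s123), h12_123⟩) =
        η (mbGen ⟨(s1, s13), h1_13⟩ * mbGen ⟨(s13, s123), h13_123⟩) ∧
      ¬Function.Injective η := by
  intro G _ η _
  rw [← MB.gen_of_le h1_12, ← MB.gen_of_le h12_123, ← MB.gen_of_le h1_13,
    ← MB.gen_of_le h13_123]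
  have hrel := MB.map_deletedRelation η
  exact ⟨hrel, fun hη => MB.deletedRelation_ne (hη hrel)⟩

end PropB
end
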